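/- arXiv:2509.05650 — 2 statements merged into one kernel-verified Lean document; each statement's English description precedes it below -/
import Mathlib

section
/- If F is a probability distribution on [0,∞) whose tail satisfies 1 - F(x) ~ x^{-1} L₀(x) as x → ∞, where L₀ is slowly varying at infinity, then F is subexponential, i.e., the tail of the two-fold convolution satisfies (1 - F*F)(x) ~ 2(1 - F(x)) as x → ∞. -/
open MeasureTheory Filter Set

noncomputable section

/-- A function `L : (0,∞) → (0,∞)` is slowly varying if `L(tx)/L(x) → 1` for each `t > 0`. -/
def SlowlyVarying (L : ℝ → ℝ) : Prop :=
  (∀ x > 0, 0 < L x) ∧ ∀ t > 0, Tendsto (fun x => L (t * x) / L x) atTop (nhds 1)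

lemma tail_zero (μ : Measure ℝ) [IsProbabilityMeasure μ] :
    Tendsto (fun x => (μ (Ioi x)).toReal) atTop (nhds 0) := by
  have h : Tendsto (fun x : ℝ => μ (Ioi x)) atTop (nhds 0) := by
    have := tendsto_measure_iInter_atTop (μ := μ) (s := fun x : ℝ => Ioi x)
      (fun i => (measurableSet_Ioi).nullMeasurableSet)
      (fun a b hab => Ioi_subset_Ioi hab) ⟨0, measure_ne_top μ _⟩
    have he : (⋂ n : ℝ, Ioi n) = (∅ : Set ℝ) := by
      ext y; simp only [mem_iInter, mem_Ioi, mem_empty_iff_false, iff_false, not_forall, not_lt]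
      exact ⟨y, le_refl y⟩
    rw [he, measure_empty] at this
    exact this
  have := (ENNReal.tendsto_toReal (by simp : (0:ENNReal) ≠ ⊤)).comp h
  simpa [Function.comp_def] using this

lemma tail_pos (μ : Measure ℝ) (L₀ : ℝ → ℝ) (hL : SlowlyVarying L₀)
    (htail : Tendsto (fun x => (μ (Ioi x)).toReal / (L₀ x / x)) atTop (nhds 1)) :
    ∀ᶠ x in atTop, 0 < (μ (Ioi x)).toReal := by
  have h1 : ∀ᶠ x in atTop, (1/2 : ℝ) < (μ (Ioi x)).toReal / (L₀ x / x) :=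
    htail.eventually_const_lt (by norm_num)
  filter_upwards [h1, eventually_gt_atTop (0:ℝ)] with x hx hx0
  by_contra h
  push_neg at h
  have h0 : (μ (Ioi x)).toReal = 0 := le_antisymm h ENNReal.toReal_nonneg
  rw [h0, zero_div] at hx; norm_num at hx

lemma ratio_lemma (μ : Measure ℝ) (L₀ : ℝ → ℝ) (hL : SlowlyVarying L₀)
    (htail : Tendsto (fun x => (μ (Ioi x)).toReal / (L₀ x / x)) atTop (nhds 1))
    (c : ℝ) (hc : 0 < c) :
    Tendsto (fun x => (μ (Ioi (c * x))).toReal / (μ (Ioi x)).toReal) atTop (nhds (1/c)) := by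
  set f : ℝ → ℝ := fun x => (μ (Ioi x)).toReal with hf
  have hmul : Tendsto (fun x : ℝ => c * x) atTop atTop :=
    Tendsto.const_mul_atTop hc tendsto_id
  have hA : Tendsto (fun x => f (c * x) / (L₀ (c * x) / (c * x))) atTop (nhds 1) :=
    htail.comp hmul
  have hB : Tendsto (fun x => L₀ (c * x) / L₀ x) atTop (nhds 1) := hL.2 c hc
  have hC : Tendsto (fun x => (L₀ x / x) / f x) atTop (nhds 1) := by
    have := (htail.inv₀ one_ne_zero)
    simp only [inv_one] at this
    refine this.congr (fun x => ?_)
    rw [inv_div]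
  have hprod : Tendsto (fun x =>
      (f (c * x) / (L₀ (c * x) / (c * x))) * ((L₀ (c * x) / L₀ x) / c) * ((L₀ x / x) / f x))
      atTop (nhds (1/c)) := by
    have := ((hA.mul (hB.div_const c)).mul hC)
    simpa using this
  refine hprod.congr' ?_
  filter_upwards [eventually_gt_atTop (0:ℝ), tail_pos μ L₀ hL htail] with x hx0 hfx
  have hcx : 0 < c * x := mul_pos hc hx0
  have hL1 : L₀ (c * x) ≠ 0 := ne_of_gt (hL.1 _ hcx)
  have hL2 : L₀ x ≠ 0 := ne_of_gt (hL.1 _ hx0)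
  have hfx' : f x ≠ 0 := ne_of_gt hfx
  field_simp
  ring

lemma conv_lower (μ : Measure ℝ) [IsProbabilityMeasure μ] (hsupp : μ (Iio 0) = 0) (x : ℝ) :
    (μ (Ioi x)).toReal * (2 - (μ (Ioi x)).toReal) ≤
      (((μ.prod μ).map (fun p : ℝ × ℝ => p.1 + p.2)) (Ioi x)).toReal := by
  have hmeas : Measurable (fun p : ℝ × ℝ => p.1 + p.2) := measurable_fst.add measurable_snd
  have hmap : ((μ.prod μ).map (fun p : ℝ × ℝ => p.1 + p.2)) (Ioi x)
      = (μ.prod μ) ((fun p : ℝ × ℝ => p.1 + p.2) ⁻¹' Ioi x) :=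
    Measure.map_apply hmeas measurableSet_Ioi
  set A : Set (ℝ × ℝ) := Ioi x ×ˢ Ici 0
  set B : Set (ℝ × ℝ) := Icc 0 x ×ˢ Ioi x
  have hdisj : Disjoint A B := by
    rw [Set.disjoint_left]
    rintro ⟨a, b⟩ ⟨ha, _⟩ ⟨hb, _⟩
    exact absurd hb.2 (not_le.2 ha)
  have hsub : A ∪ B ⊆ (fun p : ℝ × ℝ => p.1 + p.2) ⁻¹' Ioi x := by
    rintro ⟨a, b⟩ (⟨ha, hb⟩ | ⟨ha, hb⟩)
    · have hb' : (0:ℝ) ≤ b := hb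
      have ha' : x < a := ha
      simp only [mem_preimage, mem_Ioi]; linarith
    · have ha' : (0:ℝ) ≤ a := ha.1
      have hb' : x < b := hb
      simp only [mem_preimage, mem_Ioi]; linarith
  have hIci : μ (Ici 0) = 1 := by
    rw [← compl_Iio, measure_compl measurableSet_Iio (measure_ne_top μ _), hsupp,
      measure_univ, tsub_zero]
  have hUB : (μ.prod μ) (A ∪ B) = μ (Ioi x) * 1 + μ (Icc 0 x) * μ (Ioi x) := by
    rw [measure_union hdisj (measurableSet_Icc.prod measurableSet_Ioi),
      Measure.prod_prod, Measure.prod_prod, hIci]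
  have hle : μ (Ioi x) * 1 + μ (Icc 0 x) * μ (Ioi x)
      ≤ ((μ.prod μ).map (fun p : ℝ × ℝ => p.1 + p.2)) (Ioi x) := by
    rw [hmap, ← hUB]
    exact measure_mono hsub
  have hfin : ((μ.prod μ).map (fun p : ℝ × ℝ => p.1 + p.2)) (Ioi x) ≠ ⊤ := by
    rw [hmap]; exact measure_ne_top _ _
  have hto : (μ (Ioi x) * 1 + μ (Icc 0 x) * μ (Ioi x)).toReal
      ≤ (((μ.prod μ).map (fun p : ℝ × ℝ => p.1 + p.2)) (Ioi x)).toReal :=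
    ENNReal.toReal_mono hfin hle
  have hIcc : 1 - (μ (Ioi x)).toReal ≤ (μ (Icc 0 x)).toReal := by
    have h1 : μ (Ici 0) ≤ μ (Icc 0 x) + μ (Ioi x) := by
      refine le_trans (measure_mono ?_) (measure_union_le _ _)
      intro y hy
      rcases le_or_gt y x with h | h
      · exact Or.inl ⟨hy, h⟩
      · exact Or.inr h
    rw [hIci] at h1
    have := ENNReal.toReal_mono (by
      exact ENNReal.add_ne_top.2 ⟨measure_ne_top μ _, measure_ne_top μ _⟩) h1
    rw [ENNReal.toReal_add (measure_ne_top μ _) (measure_ne_top μ _)] at this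
    simp only [ENNReal.toReal_one] at this
    linarith
  rw [ENNReal.toReal_add (by finiteness) (by finiteness), ENNReal.toReal_mul,
    ENNReal.toReal_mul, ENNReal.toReal_one] at hto
  nlinarith [ENNReal.toReal_nonneg (a := μ (Ioi x))]

lemma conv_upper (μ : Measure ℝ) [IsProbabilityMeasure μ] (x ε : ℝ) :
    (((μ.prod μ).map (fun p : ℝ × ℝ => p.1 + p.2)) (Ioi x)).toReal ≤
      2 * (μ (Ioi ((1 - ε) * x))).toReal + (μ (Ioi (ε * x))).toReal * (μ (Ioi (ε * x))).toReal := by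
  have hmeas : Measurable (fun p : ℝ × ℝ => p.1 + p.2) := measurable_fst.add measurable_snd
  have hmap : ((μ.prod μ).map (fun p : ℝ × ℝ => p.1 + p.2)) (Ioi x)
      = (μ.prod μ) ((fun p : ℝ × ℝ => p.1 + p.2) ⁻¹' Ioi x) :=
    Measure.map_apply hmeas measurableSet_Ioi
  have hsub : (fun p : ℝ × ℝ => p.1 + p.2) ⁻¹' Ioi x ⊆
      (Ioi ((1 - ε) * x) ×ˢ (univ : Set ℝ)) ∪ ((univ : Set ℝ) ×ˢ Ioi ((1 - ε) * x)) ∪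
      (Ioi (ε * x) ×ˢ Ioi (ε * x)) := by
    rintro ⟨a, b⟩ hp
    simp only [mem_preimage, mem_Ioi] at hp
    by_cases ha : (1 - ε) * x < a
    · exact Or.inl (Or.inl ⟨ha, mem_univ _⟩)
    by_cases hb : (1 - ε) * x < b
    · exact Or.inl (Or.inr ⟨mem_univ _, hb⟩)
    push_neg at ha hb
    refine Or.inr ⟨?_, ?_⟩ <;> · simp only [mem_Ioi]; nlinarith
  have hle : ((μ.prod μ).map (fun p : ℝ × ℝ => p.1 + p.2)) (Ioi x) ≤
      μ (Ioi ((1 - ε) * x)) * 1 + 1 * μ (Ioi ((1 - ε) * x)) +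
        μ (Ioi (ε * x)) * μ (Ioi (ε * x)) := by
    rw [hmap]
    refine le_trans (measure_mono hsub) (le_trans (measure_union_le _ _) ?_)
    refine add_le_add (le_trans (measure_union_le _ _) ?_) ?_
    · rw [Measure.prod_prod, Measure.prod_prod, measure_univ]
    · rw [Measure.prod_prod]
  have := ENNReal.toReal_mono (by finiteness) hle
  rw [ENNReal.toReal_add (by finiteness) (by finiteness),
    ENNReal.toReal_add (by finiteness) (by finiteness),
    ENNReal.toReal_mul, ENNReal.toReal_mul, ENNReal.toReal_mul, ENNReal.toReal_one] at this
  linarith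

/-- If `F` is a probability distribution on `[0,∞)` with tail `1 - F(x) ~ x⁻¹ L₀(x)` with
`L₀` slowly varying, then `F` is subexponential: `(1 - F*F)(x) ~ 2 (1 - F(x))`. -/
theorem stmt0 (μ : Measure ℝ) [IsProbabilityMeasure μ] (hsupp : μ (Iio 0) = 0)
    (L₀ : ℝ → ℝ) (hL : SlowlyVarying L₀)
    (htail : Tendsto (fun x => (μ (Ioi x)).toReal / (L₀ x / x)) atTop (nhds 1)) :
    Tendsto (fun x =>
      (((μ.prod μ).map (fun p : ℝ × ℝ => p.1 + p.2)) (Ioi x)).toReal /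
        (2 * (μ (Ioi x)).toReal)) atTop (nhds 1) := by
  set f : ℝ → ℝ := fun x => (μ (Ioi x)).toReal with hfdef
  set g : ℝ → ℝ := fun x =>
    (((μ.prod μ).map (fun p : ℝ × ℝ => p.1 + p.2)) (Ioi x)).toReal with hgdef
  have hf0 : Tendsto f atTop (nhds 0) := tail_zero μ
  have hfpos : ∀ᶠ x in atTop, 0 < f x := tail_pos μ L₀ hL htail
  rw [Metric.tendsto_nhds]
  intro δ hδ
  -- choose ε
  set ε : ℝ := δ / (2 * δ + 4) with hεdef
  have hε0 : 0 < ε := by positivity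
  have hε1 : ε < 1 / 2 := by
    rw [hεdef, div_lt_div_iff₀ (by linarith) (by norm_num)]
    linarith
  have h1ε : 0 < 1 - ε := by linarith
  have hkey : 1 / (1 - ε) < 1 + δ / 2 := by
    rw [div_lt_iff₀ h1ε]
    have : ε * (2 * δ + 4) = δ := by
      rw [hεdef]; field_simp
    nlinarith
  -- upper bound function tends to 1/(1-ε)
  have hup : Tendsto (fun x => f ((1 - ε) * x) / f x + f (ε * x) * (f (ε * x) / f x) / 2)
      atTop (nhds (1 / (1 - ε))) := by
    have h1 : Tendsto (fun x => f ((1 - ε) * x) / f x) atTop (nhds (1 / (1 - ε))) :=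
      ratio_lemma μ L₀ hL htail (1 - ε) h1ε
    have h2 : Tendsto (fun x => f (ε * x)) atTop (nhds 0) :=
      hf0.comp (Tendsto.const_mul_atTop hε0 tendsto_id)
    have h3 : Tendsto (fun x => f (ε * x) / f x) atTop (nhds (1 / ε)) :=
      ratio_lemma μ L₀ hL htail ε hε0
    have := h1.add (((h2.mul h3).div_const 2))
    simpa using this
  have hupev : ∀ᶠ x in atTop,
      f ((1 - ε) * x) / f x + f (ε * x) * (f (ε * x) / f x) / 2 < 1 + δ :=
    hup.eventually_lt_const (by linarith)
  have hfev : ∀ᶠ x in atTop, f x < δ := by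
    have := hf0.eventually_lt_const hδ
    simpa using this
  filter_upwards [hfpos, hupev, hfev] with x hfx hux hdx
  have hfx' : f x ≠ 0 := ne_of_gt hfx
  have h2f : (0:ℝ) < 2 * f x := by linarith
  rw [Real.dist_eq, abs_lt]
  constructor
  · -- lower bound
    have hlow := conv_lower μ hsupp x
    have h1 : f x * (2 - f x) / (2 * f x) ≤ g x / (2 * f x) :=
      (div_le_div_iff_of_pos_right h2f).2 hlow
    have h2 : f x * (2 - f x) / (2 * f x) = 1 - f x / 2 := by
      field_simp
    linarith
  · -- upper bound
    have hupp := conv_upper μ x ε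
    have h1 : g x / (2 * f x) ≤
        (2 * f ((1 - ε) * x) + f (ε * x) * f (ε * x)) / (2 * f x) :=
      (div_le_div_iff_of_pos_right h2f).2 hupp
    have h2 : (2 * f ((1 - ε) * x) + f (ε * x) * f (ε * x)) / (2 * f x)
        = f ((1 - ε) * x) / f x + f (ε * x) * (f (ε * x) / f x) / 2 := by
      field_simp
    linarith
end
end

section
/- Let b ∈ (0,1), let A ≥ 0 with P(A > t) ~ (1+t)^{-1}, and let P(B > x) = L(x)/(1+x) with L(x) ~ (log x)^{-1-ε} for some ε > 0. Then Σ_{n≥1} E[A · 1{A ≤ x b^{-n}}] · n b^{n-1} · P(B > x) = o(1/x) as x → ∞. -/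
open MeasureTheory Filter Set

noncomputable section

lemma trunc_exp_bound {Ω : Type*} [MeasurableSpace Ω] (Pr : Measure Ω) [IsProbabilityMeasure Pr]
    (A : Ω → ℝ) (hA : Measurable A) (hApos : ∀ ω, 0 ≤ A ω)
    (htailA : Tendsto (fun t => (Pr {ω | A ω > t}).toReal * (1 + t)) atTop (nhds 1)) :
    ∃ C : ℝ, 0 ≤ C ∧ ∀ t ≥ 1,
      ∫ ω, (if A ω ≤ t then A ω else 0) ∂Pr ≤ C + 2 * Real.log (1 + t) := by
  obtain ⟨M0, hM0⟩ := eventually_atTop.mp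
    (htailA.eventually (eventually_le_nhds (by norm_num : (1:ℝ) < 2)))
  set M : ℝ := max M0 2 with hMdef
  have hM2 : (2:ℝ) ≤ M := le_max_right _ _
  have hMtail : ∀ s, M ≤ s → (Pr {ω | A ω > s}).toReal ≤ 2 / (1 + s) := by
    intro s hs
    have h1s : (0:ℝ) < 1 + s := by linarith
    rw [le_div_iff₀ h1s]
    exact hM0 s (le_trans (le_max_left _ _) hs)
  refine ⟨M, by linarith, fun t ht => ?_⟩
  have h1t : (0:ℝ) ≤ Real.log (1 + t) := Real.log_nonneg (by linarith)
  set f : Ω → ℝ := fun ω => if A ω ≤ t then A ω else 0 with hfdef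
  have hmeas : Measurable f := Measurable.ite (measurableSet_le hA measurable_const) hA
    measurable_const
  have f_nn : ∀ ω, 0 ≤ f ω := fun ω => by
    by_cases h : A ω ≤ t <;> simp [hfdef, h, hApos ω]
  have f_le : ∀ ω, f ω ≤ t := fun ω => by
    by_cases h : A ω ≤ t <;> simp [hfdef, h] <;> linarith
  rcases le_or_gt t M with h | h
  · -- small t : crude bound by t
    have hint : Integrable f Pr := by
      refine Integrable.mono' (integrable_const t) hmeas.aestronglyMeasurable
        (ae_of_all _ fun ω => ?_)
      rw [Real.norm_eq_abs, abs_of_nonneg (f_nn ω)]; exact f_le ω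
    calc ∫ ω, f ω ∂Pr ≤ ∫ _, t ∂Pr := integral_mono hint (integrable_const t) f_le
      _ = t := by simp
      _ ≤ M + 2 * Real.log (1 + t) := by linarith
  · -- large t : layer cake
    have key : ∫ ω, f ω ∂Pr = (∫⁻ s in Ioi (0:ℝ), Pr {a | s < f a}).toReal := by
      rw [integral_eq_lintegral_of_nonneg_ae (ae_of_all _ f_nn) hmeas.aestronglyMeasurable,
        lintegral_eq_lintegral_meas_lt Pr (ae_of_all _ f_nn) hmeas.aemeasurable]
    rw [key]
    have hMpos : (0:ℝ) < M := by linarith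
    have hsplit : Ioi (0:ℝ) = (Ioc 0 M ∪ Ioc M t) ∪ Ioi t := by
      rw [Ioc_union_Ioc_eq_Ioc hMpos.le h.le, Ioc_union_Ioi_eq_Ioi (by linarith : (0:ℝ) ≤ t)]
    have hsum : ∫⁻ s in Ioi (0:ℝ), Pr {a | s < f a}
        = (∫⁻ s in Ioc (0:ℝ) M, Pr {a | s < f a}) + (∫⁻ s in Ioc M t, Pr {a | s < f a})
          + ∫⁻ s in Ioi t, Pr {a | s < f a} := by
      rw [hsplit, lintegral_union measurableSet_Ioi, lintegral_union measurableSet_Ioc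
        (Ioc_disjoint_Ioc_of_le le_rfl)]
      rw [Ioc_union_Ioc_eq_Ioc hMpos.le h.le]
      exact Ioc_disjoint_Ioi_same
    have b1 : (∫⁻ s in Ioc (0:ℝ) M, Pr {a | s < f a}) ≤ ENNReal.ofReal M := by
      calc (∫⁻ s in Ioc (0:ℝ) M, Pr {a | s < f a}) ≤ ∫⁻ _ in Ioc (0:ℝ) M, 1 :=
            setLIntegral_mono' measurableSet_Ioc fun s _ => prob_le_one
        _ = ENNReal.ofReal M := by rw [setLIntegral_one, Real.volume_Ioc, sub_zero]
    have b3 : (∫⁻ s in Ioi t, Pr {a | s < f a}) = 0 := by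
      refine le_antisymm ?_ zero_le
      calc (∫⁻ s in Ioi t, Pr {a | s < f a}) ≤ ∫⁻ _ in Ioi t, 0 := by
            refine setLIntegral_mono' measurableSet_Ioi fun s hs => ?_
            have : {a | s < f a} = ∅ := by
              ext a; simp only [mem_setOf_eq, mem_empty_iff_false, iff_false, not_lt]
              exact (f_le a).trans (le_of_lt hs)
            simp [this]
        _ = 0 := by simp
    have b2 : (∫⁻ s in Ioc M t, Pr {a | s < f a})
        ≤ ENNReal.ofReal (2 * Real.log (1 + t)) := by
      have step1 : (∫⁻ s in Ioc M t, Pr {a | s < f a})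
          ≤ ∫⁻ s in Ioc M t, ENNReal.ofReal (2 / (1 + s)) := by
        refine setLIntegral_mono' measurableSet_Ioc fun s hs => ?_
        have hsub : {a | s < f a} ⊆ {ω | A ω > s} := by
          intro a ha
          simp only [mem_setOf_eq] at ha ⊢
          by_cases hc : A a ≤ t
          · simpa [hfdef, hc] using ha
          · exfalso; simp only [hfdef, if_neg hc] at ha; linarith [hs.1]
        refine le_trans (measure_mono hsub) ?_
        rw [ENNReal.le_ofReal_iff_toReal_le (measure_ne_top Pr _)
          (div_nonneg (by norm_num) (by have := hs.1; linarith))]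
        exact hMtail s hs.1.le
      have hcont : ContinuousOn (fun s : ℝ => 2 / (1 + s)) (Icc M t) := by
        refine ContinuousOn.div continuousOn_const
          ((continuous_const.add continuous_id).continuousOn) fun x hx => ?_
        have := hx.1; intro hzero; linarith
      have hintg : IntegrableOn (fun s : ℝ => 2 / (1 + s)) (Ioc M t) volume :=
        (hcont.integrableOn_Icc).mono_set Ioc_subset_Icc_self
      have step2 : ∫⁻ s in Ioc M t, ENNReal.ofReal (2 / (1 + s))
          = ENNReal.ofReal (∫ s in Ioc M t, 2 / (1 + s)) := by
        rw [← ofReal_integral_eq_lintegral_ofReal hintg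
          ((ae_restrict_iff' measurableSet_Ioc).2 (ae_of_all _ fun s hs =>
            div_nonneg (by norm_num) (by have := hs.1; linarith)))]
      have step3 : ∫ s in Ioc M t, 2 / (1 + s) ≤ 2 * Real.log (1 + t) := by
        have h1M : (0:ℝ) < 1 + M := by linarith
        have h1t' : (0:ℝ) < 1 + t := by linarith
        have hmem : (0:ℝ) ∉ Set.uIcc (1 + M) (1 + t) := by
          intro hmem
          rcases Set.mem_uIcc.mp hmem with ⟨h1, _⟩ | ⟨h1, _⟩ <;> linarith
        have hval : ∫ s in Ioc M t, 2 / (1 + s) = 2 * Real.log ((1 + t) / (1 + M)) := by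
          rw [← intervalIntegral.integral_of_le h.le]
          simp_rw [div_eq_mul_inv]
          rw [intervalIntegral.integral_const_mul]
          have hcomp : ∫ s in M..t, (1 + s)⁻¹
              = ∫ y in (1 + M)..(1 + t), y⁻¹ :=
            intervalIntegral.integral_comp_add_left (fun y => y⁻¹) 1
          rw [hcomp, integral_inv hmem, div_eq_mul_inv]
        rw [hval, Real.log_div h1t'.ne' h1M.ne']
        have : (0:ℝ) ≤ Real.log (1 + M) := Real.log_nonneg (by linarith)
        linarith
      calc (∫⁻ s in Ioc M t, Pr {a | s < f a})
          ≤ ENNReal.ofReal (∫ s in Ioc M t, 2 / (1 + s)) := step1.trans_eq step2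
        _ ≤ ENNReal.ofReal (2 * Real.log (1 + t)) := ENNReal.ofReal_le_ofReal step3
    refine ENNReal.toReal_le_of_le_ofReal (by linarith) ?_
    rw [hsum, b3, add_zero, ENNReal.ofReal_add (by linarith : (0:ℝ) ≤ M) (by linarith)]
    exact add_le_add b1 b2

/-- Let `b ∈ (0,1)`, `A ≥ 0` with `P(A > t) ~ (1+t)⁻¹`, and `P(B > x) = L(x)/(1+x)`
with `L(x) ~ (log x)^{-1-ε}`, `ε > 0`. Then
`Σ_{n≥1} E[A 1{A ≤ x b^{-n}}] n b^{n-1} P(B > x) = o(1/x)` as `x → ∞`. -/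
theorem stmt8 {Ω : Type*} [MeasurableSpace Ω] (Pr : Measure Ω) [IsProbabilityMeasure Pr]
    (A B : Ω → ℝ) (hA : Measurable A) (hApos : ∀ ω, 0 ≤ A ω) (hBpos : ∀ ω, 0 ≤ B ω)
    (htailA : Tendsto (fun t => (Pr {ω | A ω > t}).toReal * (1 + t)) atTop (nhds 1))
    (L : ℝ → ℝ) (hLsv : SlowlyVarying L) (ε : ℝ) (hε : 0 < ε)
    (hL : Tendsto (fun x => L x * (Real.log x) ^ (1 + ε)) atTop (nhds 1))
    (htailB : ∀ x > 0, (Pr {ω | B ω > x}).toReal = L x / (1 + x))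
    (b : ℝ) (hb : b ∈ Set.Ioo (0:ℝ) 1) :
    Tendsto (fun x => x * ∑' n : ℕ,
      (∫ ω, (if A ω ≤ x / b ^ (n + 1) then A ω else 0) ∂Pr) *
        (((n : ℝ) + 1) * b ^ n) * (Pr {ω | B ω > x}).toReal) atTop (nhds 0) := by
  obtain ⟨hbpos, hb1⟩ := hb
  obtain ⟨C, hC0, hCb⟩ := trunc_exp_bound Pr A hA hApos htailA
  set c : ℝ := -Real.log b with hcdef
  have hcpos : 0 < c := neg_pos.mpr (Real.log_neg hbpos hb1)
  have hbnorm : ‖b‖ < 1 := by rw [Real.norm_eq_abs, abs_of_pos hbpos]; exact hb1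
  set C' : ℝ := C + 2 * Real.log 2 with hC'def
  have hC'0 : 0 ≤ C' := by
    have := Real.log_nonneg (by norm_num : (1:ℝ) ≤ 2); linarith
  have hs1 : Summable (fun n : ℕ => ((n:ℝ) + 1) * b ^ n) := by
    have h1 := summable_pow_mul_geometric_of_norm_lt_one (R := ℝ) 1 hbnorm
    have h0 := summable_geometric_of_lt_one hbpos.le hb1
    exact (h1.add h0).congr fun n => by push_cast; ring
  have hs2 : Summable (fun n : ℕ => ((n:ℝ) + 1) ^ 2 * b ^ n) := by
    have h2 := summable_pow_mul_geometric_of_norm_lt_one (R := ℝ) 2 hbnorm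
    have h1 := summable_pow_mul_geometric_of_norm_lt_one (R := ℝ) 1 hbnorm
    have h0 := summable_geometric_of_lt_one hbpos.le hb1
    exact ((h2.add (h1.mul_left 2)).add h0).congr fun n => by push_cast; ring
  set S1 : ℝ := ∑' n : ℕ, ((n:ℝ) + 1) * b ^ n with hS1def
  set S2 : ℝ := ∑' n : ℕ, ((n:ℝ) + 1) ^ 2 * b ^ n with hS2def
  have hS1nn : 0 ≤ S1 := tsum_nonneg fun n => by positivity
  -- the dominating function
  set G : ℝ → ℝ := fun x => L x * ((C' + 2 * Real.log x) * S1 + 2 * c * S2) with hGdef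
  -- limits of L and L·log
  have hLzero : Tendsto L atTop (nhds 0) := by
    have h1 : Tendsto (fun x : ℝ => Real.log x ^ (-(1 + ε))) atTop (nhds 0) :=
      (tendsto_rpow_neg_atTop (by linarith)).comp Real.tendsto_log_atTop
    have h2 := hL.mul h1
    rw [mul_zero] at h2
    refine Tendsto.congr' ?_ h2
    filter_upwards [eventually_gt_atTop 1] with x hx
    have hlx : 0 < Real.log x := Real.log_pos hx
    rw [mul_assoc, ← Real.rpow_add hlx, show (1 + ε) + -(1 + ε) = 0 by ring,
      Real.rpow_zero, mul_one]
  have hLlog : Tendsto (fun x => L x * Real.log x) atTop (nhds 0) := by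
    have h1 : Tendsto (fun x : ℝ => Real.log x ^ (-ε)) atTop (nhds 0) :=
      (tendsto_rpow_neg_atTop hε).comp Real.tendsto_log_atTop
    have h2 := hL.mul h1
    rw [mul_zero] at h2
    refine Tendsto.congr' ?_ h2
    filter_upwards [eventually_gt_atTop 1] with x hx
    have hlx : 0 < Real.log x := Real.log_pos hx
    rw [mul_assoc, ← Real.rpow_add hlx, show (1 + ε) + -ε = 1 by ring, Real.rpow_one]
  have hG : Tendsto G atTop (nhds 0) := by
    have h := (hLzero.mul_const (C' * S1 + 2 * c * S2)).add (hLlog.mul_const (2 * S1))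
    rw [zero_mul, zero_mul, add_zero] at h
    exact Tendsto.congr (fun x => by simp only [hGdef]; ring) h
  refine squeeze_zero' ?_ ?_ hG
  · filter_upwards [eventually_ge_atTop (1:ℝ)] with x hx
    refine mul_nonneg (by linarith) (tsum_nonneg fun n => ?_)
    refine mul_nonneg (mul_nonneg (integral_nonneg fun ω => ?_) (by positivity))
      ENNReal.toReal_nonneg
    by_cases h' : A ω ≤ x / b ^ (n + 1) <;> simp [h', hApos ω]
  · filter_upwards [eventually_ge_atTop (1:ℝ)] with x hx
    have hxpos : (0:ℝ) < x := by linarith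
    have hbpow : ∀ n : ℕ, 0 < b ^ (n + 1) := fun n => pow_pos hbpos _
    have ht1 : ∀ n : ℕ, 1 ≤ x / b ^ (n + 1) := fun n =>
      (one_le_div (hbpow n)).2 (le_trans (pow_le_one₀ hbpos.le hb1.le) hx)
    set a : ℕ → ℝ := fun n =>
      (∫ ω, (if A ω ≤ x / b ^ (n + 1) then A ω else 0) ∂Pr) * (((n:ℝ) + 1) * b ^ n)
      with hadef
    set g : ℕ → ℝ := fun n =>
      (C' + 2 * Real.log x) * (((n:ℝ) + 1) * b ^ n) + 2 * c * (((n:ℝ) + 1) ^ 2 * b ^ n)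
      with hgdef
    have hInn : ∀ n : ℕ, 0 ≤ ∫ ω, (if A ω ≤ x / b ^ (n + 1) then A ω else 0) ∂Pr :=
      fun n => integral_nonneg fun ω => by
        by_cases h' : A ω ≤ x / b ^ (n + 1) <;> simp [h', hApos ω]
    have hI : ∀ n : ℕ, (∫ ω, (if A ω ≤ x / b ^ (n + 1) then A ω else 0) ∂Pr)
        ≤ C' + 2 * Real.log x + 2 * (((n:ℝ) + 1) * c) := by
      intro n
      have htpos : (0:ℝ) < x / b ^ (n + 1) := by linarith [ht1 n]
      have h1 := hCb (x / b ^ (n + 1)) (ht1 n)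
      have hlog1 : Real.log (1 + x / b ^ (n + 1)) ≤ Real.log 2 + Real.log (x / b ^ (n + 1)) := by
        rw [← Real.log_mul (by norm_num) htpos.ne']
        exact Real.log_le_log (by linarith) (by linarith [ht1 n])
      have hlog2 : Real.log (x / b ^ (n + 1)) = Real.log x + ((n:ℝ) + 1) * c := by
        rw [Real.log_div hxpos.ne' (hbpow n).ne', Real.log_pow, hcdef]
        push_cast; ring
      rw [hlog2] at hlog1
      rw [hC'def]
      linarith
    have hterm : ∀ n, a n ≤ g n := by
      intro n
      have hbn : (0:ℝ) ≤ ((n:ℝ) + 1) * b ^ n := by positivity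
      calc a n ≤ (C' + 2 * Real.log x + 2 * (((n:ℝ) + 1) * c)) * (((n:ℝ) + 1) * b ^ n) :=
            mul_le_mul_of_nonneg_right (hI n) hbn
        _ = g n := by rw [hgdef]; ring
    have hann : ∀ n, 0 ≤ a n := fun n =>
      mul_nonneg (hInn n) (by positivity)
    have hgsum : Summable g := (hs1.mul_left _).add (hs2.mul_left _)
    have hasum : Summable a := Summable.of_nonneg_of_le hann hterm hgsum
    have htsum_le : ∑' n, a n ≤ (C' + 2 * Real.log x) * S1 + 2 * c * S2 := by
      calc ∑' n, a n ≤ ∑' n, g n := Summable.tsum_le_tsum hterm hasum hgsum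
        _ = (C' + 2 * Real.log x) * S1 + 2 * c * S2 := by
          rw [hgdef, Summable.tsum_add (hs1.mul_left _) (hs2.mul_left _), tsum_mul_left, tsum_mul_left]
    have hrw : x * ∑' n : ℕ,
        (∫ ω, (if A ω ≤ x / b ^ (n + 1) then A ω else 0) ∂Pr) *
          (((n : ℝ) + 1) * b ^ n) * (Pr {ω | B ω > x}).toReal
        = (x * (Pr {ω | B ω > x}).toReal) * ∑' n, a n := by
      rw [tsum_mul_right]; ring
    rw [hrw]
    have hLx : 0 < L x := hLsv.1 x hxpos
    have hPB : x * (Pr {ω | B ω > x}).toReal ≤ L x := by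
      rw [htailB x hxpos]
      rw [div_eq_mul_inv, ← mul_assoc]
      calc x * L x * (1 + x)⁻¹ ≤ (1 + x) * L x * (1 + x)⁻¹ := by
            apply mul_le_mul_of_nonneg_right _ (by positivity)
            exact mul_le_mul_of_nonneg_right (by linarith) hLx.le
        _ = L x := by field_simp
    have htsum_nn : 0 ≤ ∑' n, a n := tsum_nonneg hann
    calc (x * (Pr {ω | B ω > x}).toReal) * ∑' n, a n
        ≤ L x * ((C' + 2 * Real.log x) * S1 + 2 * c * S2) :=
          mul_le_mul hPB htsum_le htsum_nn hLx.le
      _ = G x := rfl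
end
end
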